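/- arXiv:2407.17954 — 5 statements merged into one kernel-verified Lean document; each statement's English description precedes it below -/
import Mathlib

section
/- There exist constants 0 < C₁ ≤ C₂ depending only on q, p, K₁, K₂ such that for every integer m ≥ 0 and every u ∈ (0,1): C₁·q^{min(ℓ_u, m)} ≤ Σ_{ℓ=0}^{m} s_ℓ q^{ℓ}/(s_ℓ + u) ≤ C₂·q^{min(ℓ_u, m)}. Equivalently, F(u) := Σ_{ℓ=0}^{m} s_ℓ q^{ℓ}/(s_ℓ + u) satisfies C₁'·min(u^{-1/κ}, q^m) ≤ F(u) ≤ C₂'·min(u^{-1/κ}, q^m) for constants C₁', C₂' depending only on q, p, K₁, K₂. -/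
/-!
Write `F = ∑_{ℓ ≤ m} s_ℓ q^ℓ / (s_ℓ + u)` and `L = min(ℓ_u, m)`. Since `s_L ≥ K₁ p^{-ℓ_u} > K₁ u`,
the `L`-th term alone is at least `K₁/(K₁+1) · q^L`. Conversely every term is at most `q^ℓ`,
which controls the terms with `ℓ ≤ ℓ_u` by a geometric sum `≤ 2 q^{ℓ_u}`, while for `ℓ > ℓ_u`
the term is at most `s_ℓ q^ℓ / u ≤ K₂ p^{ℓ_u+1} (q/p)^ℓ`, a geometric tail of size
`O(q^{ℓ_u})` because `q < p`. Finally `u^{-1/κ}` lies between `q^{ℓ_u}` and `q^{ℓ_u+1}`, so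
`min(u^{-1/κ}, q^m)` is comparable to `q^L`.
-/

open Finset Real

lemma div_add_one_le_div_add {K s u : ℝ} (hK : 0 < K) (hu : 0 < u) (h : K * u ≤ s) :
    K / (K + 1) ≤ s / (s + u) := by
  have hs : 0 < s := lt_of_lt_of_le (mul_pos hK hu) h
  rw [div_le_div_iff₀ (by linarith) (by linarith)]
  nlinarith

lemma geom_sum_range_succ_le_two_mul_pow {q : ℝ} (hq : 2 ≤ q) (n : ℕ) :
    ∑ ℓ ∈ range (n + 1), q ^ ℓ ≤ 2 * q ^ n := by
  rw [geom_sum_eq (by linarith), div_le_iff₀ (by linarith), pow_succ]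
  nlinarith [pow_pos (by linarith : (0 : ℝ) < q) n]

section WeightedSum

variable {p q u K : ℝ} {s : ℕ → ℝ}

lemma mul_pow_min_le_sum_div_add (hp : 1 ≤ p) (hq : 0 ≤ q) (hK : 0 < K)
    (hs : ∀ ℓ, K * (p ^ ℓ)⁻¹ ≤ s ℓ) (hu₀ : 0 < u) {n : ℕ} (hu : u < (p ^ n)⁻¹) (m : ℕ) :
    K / (K + 1) * q ^ min n m ≤ ∑ ℓ ∈ range (m + 1), s ℓ * q ^ ℓ / (s ℓ + u) := by
  have hs₀ : ∀ ℓ, 0 ≤ s ℓ := fun ℓ => le_trans (by positivity) (hs ℓ)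
  set L := min n m
  have hsL : K * u ≤ s L := calc
    K * u ≤ K * (p ^ n)⁻¹ := by gcongr
    _ ≤ K * (p ^ L)⁻¹ := by gcongr; exact min_le_left n m
    _ ≤ s L := hs L
  calc K / (K + 1) * q ^ L ≤ s L / (s L + u) * q ^ L :=
        mul_le_mul_of_nonneg_right (div_add_one_le_div_add hK hu₀ hsL) (by positivity)
    _ = s L * q ^ L / (s L + u) := div_mul_eq_mul_div _ _ _
    _ ≤ ∑ ℓ ∈ range (m + 1), s ℓ * q ^ ℓ / (s ℓ + u) :=
        single_le_sum (f := fun ℓ => s ℓ * q ^ ℓ / (s ℓ + u))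
          (fun ℓ _ => by have := hs₀ ℓ; positivity)
          (mem_range.2 (Nat.lt_succ_of_le (min_le_right n m)))

lemma sum_div_add_le_two_mul_pow (hq : 2 ≤ q) (hu : 0 ≤ u) (hs : ∀ ℓ, 0 ≤ s ℓ) (n : ℕ) :
    ∑ ℓ ∈ range (n + 1), s ℓ * q ^ ℓ / (s ℓ + u) ≤ 2 * q ^ n := by
  refine le_trans (sum_le_sum fun ℓ _ => ?_) (geom_sum_range_succ_le_two_mul_pow hq n)
  rw [mul_div_right_comm]
  exact mul_le_of_le_one_left (by positivity)
    (div_le_one_of_le₀ (by linarith) (by linarith [hs ℓ]))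

lemma sum_Ico_div_add_le_mul_pow (hq : 0 ≤ q) (hqp : q < p)
    (hs : ∀ ℓ, 0 ≤ s ℓ ∧ s ℓ ≤ K * (p ^ ℓ)⁻¹) {n : ℕ} (hu : (p ^ (n + 1))⁻¹ ≤ u) (m : ℕ) :
    ∑ ℓ ∈ Ico (n + 1) m, s ℓ * q ^ ℓ / (s ℓ + u) ≤ K * p / (p - q) * q ^ (n + 1) := by
  have hp : 0 < p := lt_of_le_of_lt hq hqp
  have hu₀ : 0 < u := lt_of_lt_of_le (by positivity) hu
  have hK : 0 ≤ K := by simpa using (hs 0).1.trans (hs 0).2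
  have hpu : 1 ≤ p ^ (n + 1) * u := by
    rw [inv_le_iff_one_le_mul₀ (by positivity)] at hu; rwa [mul_comm]
  have hterm : ∀ ℓ, s ℓ * q ^ ℓ / (s ℓ + u) ≤ K * p ^ (n + 1) * (q / p) ^ ℓ := fun ℓ => calc
    s ℓ * q ^ ℓ / (s ℓ + u) ≤ s ℓ * q ^ ℓ / u :=
        div_le_div_of_nonneg_left (by have := (hs ℓ).1; positivity) hu₀ (by linarith [(hs ℓ).1])
    _ ≤ K * (p ^ ℓ)⁻¹ * q ^ ℓ * p ^ (n + 1) := by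
        rw [div_le_iff₀ hu₀]
        calc s ℓ * q ^ ℓ ≤ K * (p ^ ℓ)⁻¹ * q ^ ℓ := by gcongr; exact (hs ℓ).2
          _ ≤ K * (p ^ ℓ)⁻¹ * q ^ ℓ * (p ^ (n + 1) * u) :=
              le_mul_of_one_le_right (by positivity) hpu
          _ = _ := by ring
    _ = K * p ^ (n + 1) * (q / p) ^ ℓ := by rw [div_pow]; field_simp
  have hqp₁ : q / p < 1 := (div_lt_one hp).2 hqp
  calc ∑ ℓ ∈ Ico (n + 1) m, s ℓ * q ^ ℓ / (s ℓ + u)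
      ≤ K * p ^ (n + 1) * ∑ ℓ ∈ Ico (n + 1) m, (q / p) ^ ℓ := by
        rw [mul_sum]; exact sum_le_sum fun ℓ _ => hterm ℓ
    _ ≤ K * p ^ (n + 1) * ((q / p) ^ (n + 1) / (1 - q / p)) := by
        gcongr; exact geom_sum_Ico_le_of_lt_one (by positivity) hqp₁
    _ = K * p / (p - q) * q ^ (n + 1) := by
        rw [div_pow]; field_simp [(sub_pos.2 hqp).ne']

lemma sum_div_add_le_mul_pow_min (hq : 2 ≤ q) (hqp : q < p)
    (hs : ∀ ℓ, 0 ≤ s ℓ ∧ s ℓ ≤ K * (p ^ ℓ)⁻¹) {n : ℕ} (hu : (p ^ (n + 1))⁻¹ ≤ u) (m : ℕ) :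
    ∑ ℓ ∈ range (m + 1), s ℓ * q ^ ℓ / (s ℓ + u) ≤ (2 + K * p * q / (p - q)) * q ^ min n m := by
  have hp : 0 < p := by linarith
  have hu₀ : 0 ≤ u := le_trans (by positivity) hu
  have hK : 0 ≤ K := by simpa using (hs 0).1.trans (hs 0).2
  have hhead := sum_div_add_le_two_mul_pow hq hu₀ (fun ℓ => (hs ℓ).1)
  rcases le_or_gt m n with hmn | hnm
  · rw [min_eq_right hmn]
    refine (hhead m).trans (mul_le_mul_of_nonneg_right ?_ (by positivity))
    have : 0 ≤ K * p * q / (p - q) := div_nonneg (by positivity) (by linarith)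
    linarith
  · rw [min_eq_left hnm.le, ← sum_range_add_sum_Ico _ (by omega : n + 1 ≤ m + 1)]
    calc _ ≤ 2 * q ^ n + K * p / (p - q) * q ^ (n + 1) :=
          add_le_add (hhead n) (sum_Ico_div_add_le_mul_pow (by linarith) hqp hs hu _)
      _ = (2 + K * p * q / (p - q)) * q ^ n := by ring

end WeightedSum

lemma inv_pow_rpow_neg_one_div_log_div_log {p q : ℝ} (hp : 0 < p) (hp₁ : p ≠ 1) (hq : 0 < q)
    (n : ℕ) : ((p ^ n)⁻¹) ^ (-1 / (log p / log q)) = q ^ n := by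
  have hlogp : log p ≠ 0 := log_ne_zero_of_pos_of_ne_one hp hp₁
  rw [← rpow_natCast, ← rpow_natCast, ← rpow_neg hp.le, ← rpow_mul hp.le,
    rpow_def_of_pos hp, rpow_def_of_pos hq]
  by_cases hlogq : log q = 0
  · simp [hlogq]
  · congr 1; field_simp

lemma pow_le_rpow_and_rpow_le_pow_succ {p q u : ℝ} (hp : 1 < p) (hq : 1 ≤ q) {n : ℕ}
    (hu₁ : (p ^ (n + 1))⁻¹ ≤ u) (hu₂ : u < (p ^ n)⁻¹) :
    q ^ n ≤ u ^ (-1 / (log p / log q)) ∧ u ^ (-1 / (log p / log q)) ≤ q ^ (n + 1) := by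
  have hp₀ : 0 < p := by linarith
  have he : -1 / (log p / log q) ≤ 0 :=
    div_nonpos_of_nonpos_of_nonneg (by norm_num) (div_nonneg (log_pos hp).le (log_nonneg hq))
  have key := inv_pow_rpow_neg_one_div_log_div_log hp₀ hp.ne' (by linarith : 0 < q)
  constructor
  · rw [← key n]
    exact rpow_le_rpow_of_nonpos (lt_of_lt_of_le (by positivity) hu₁) hu₂.le he
  · rw [← key (n + 1)]
    exact rpow_le_rpow_of_nonpos (by positivity) hu₁ he

lemma pow_min_le_min_and_min_le_mul_pow_min {q x : ℝ} (hq : 1 ≤ q) {n : ℕ}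
    (hx₁ : q ^ n ≤ x) (hx₂ : x ≤ q ^ (n + 1)) (m : ℕ) :
    q ^ min n m ≤ min x (q ^ m) ∧ min x (q ^ m) ≤ q * q ^ min n m := by
  refine ⟨le_min ((pow_le_pow_right₀ hq (min_le_left n m)).trans hx₁)
    (pow_le_pow_right₀ hq (min_le_right n m)), ?_⟩
  rcases le_total n m with h | h
  · rw [min_eq_left h, ← pow_succ']; exact (min_le_left _ _).trans hx₂
  · rw [min_eq_right h]
    exact (min_le_right _ _).trans (le_mul_of_one_le_left (by positivity) hq)

/-- Two-sided estimate `F(u) = Σ_{ℓ=0}^m s_ℓ q^ℓ/(s_ℓ+u) ≍ q^{min(ℓ_u, m)} ≍ min(u^{-1/κ}, q^m)`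
for `u ∈ (0,1)`, where `p^{-(ℓ_u+1)} ≤ u < p^{-ℓ_u}` and `κ = log p / log q`,
with constants depending only on `q, p, K₁, K₂`. -/
theorem F_two_sided_estimate
    (q : ℕ) (hq : 2 ≤ q) (p K₁ K₂ : ℝ) (hpq : (q : ℝ) < p)
    (hK₁ : 0 < K₁) (hK₁₂ : K₁ ≤ K₂) :
    ∃ C₁ C₂ C₁' C₂' : ℝ, 0 < C₁ ∧ C₁ ≤ C₂ ∧ 0 < C₁' ∧ C₁' ≤ C₂' ∧
      ∀ s : ℕ → ℝ,
        (∀ ℓ : ℕ, K₁ * p ^ (-(ℓ : ℝ)) ≤ s ℓ ∧ s ℓ ≤ K₂ * p ^ (-(ℓ : ℝ))) →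
        ∀ m : ℕ, ∀ u : ℝ, 0 < u → u < 1 →
        ∀ lu : ℕ, p ^ (-((lu : ℝ) + 1)) ≤ u → u < p ^ (-(lu : ℝ)) →
          (C₁ * (q : ℝ) ^ (min lu m)
              ≤ ∑ ℓ ∈ range (m + 1), s ℓ * (q : ℝ) ^ ℓ / (s ℓ + u) ∧
           ∑ ℓ ∈ range (m + 1), s ℓ * (q : ℝ) ^ ℓ / (s ℓ + u)
              ≤ C₂ * (q : ℝ) ^ (min lu m)) ∧
          (C₁' * min (u ^ (-1 / (Real.log p / Real.log q))) ((q : ℝ) ^ m)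
              ≤ ∑ ℓ ∈ range (m + 1), s ℓ * (q : ℝ) ^ ℓ / (s ℓ + u) ∧
           ∑ ℓ ∈ range (m + 1), s ℓ * (q : ℝ) ^ ℓ / (s ℓ + u)
              ≤ C₂' * min (u ^ (-1 / (Real.log p / Real.log q))) ((q : ℝ) ^ m)) := by
  have hq₂ : (2 : ℝ) ≤ q := by exact_mod_cast hq
  have hp : 1 < p := by linarith
  have hC₁ : K₁ / (K₁ + 1) < 1 := (div_lt_one (by linarith)).2 (by linarith)
  have hK₂ : 0 ≤ K₂ := by linarith
  have hC₂ : 2 ≤ 2 + K₂ * p * q / (p - q) :=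
    le_add_of_nonneg_right (div_nonneg (by positivity) (by linarith))
  refine ⟨K₁ / (K₁ + 1), 2 + K₂ * p * q / (p - q), K₁ / (K₁ + 1) / q, 2 + K₂ * p * q / (p - q),
    by positivity, by linarith, div_pos (by positivity) (by linarith),
    (div_le_self (by positivity) (by linarith)).trans (by linarith), ?_⟩
  intro s hs m u hu₀ _ lu hu₁ hu₂
  simp only [rpow_neg (by linarith : (0 : ℝ) ≤ p), rpow_natCast] at hs hu₂
  rw [← Nat.cast_add_one, rpow_neg (by linarith), rpow_natCast] at hu₁
  have hs₀ : ∀ ℓ, 0 ≤ s ℓ := fun ℓ => le_trans (by positivity) (hs ℓ).1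
  have hlow := mul_pow_min_le_sum_div_add (q := q) hp.le (by positivity) hK₁ (fun ℓ => (hs ℓ).1)
    hu₀ hu₂ m
  have hup := sum_div_add_le_mul_pow_min hq₂ hpq (fun ℓ => ⟨hs₀ ℓ, (hs ℓ).2⟩) hu₁ m
  obtain ⟨hrpow₁, hrpow₂⟩ := pow_le_rpow_and_rpow_le_pow_succ (q := q) hp (by linarith) hu₁ hu₂
  obtain ⟨hmin₁, hmin₂⟩ := pow_min_le_min_and_min_le_mul_pow_min (by linarith) hrpow₁ hrpow₂ m
  refine ⟨⟨hlow, hup⟩, ?_, hup.trans (by gcongr)⟩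
  calc K₁ / (K₁ + 1) / q * min (u ^ (-1 / (log p / log q))) ((q : ℝ) ^ m)
      ≤ K₁ / (K₁ + 1) / q * (q * q ^ min lu m) := by gcongr
    _ = K₁ / (K₁ + 1) * q ^ min lu m := by field_simp
    _ ≤ _ := hlow
end

section
/- Let λ* = λ*(λ, n, m) be the unique positive solution of n − λ/λ* = Σ_{ℓ=0}^{m} s_ℓ q^{ℓ}/(s_ℓ + λ*). There exist constants c₀ ∈ (0,1), c₀' ≥ 1 and 0 < C₁ ≤ C₂, 0 < C₃ ≤ C₄ depending only on q, p, K₁, K₂ such that for all integers m ≥ 0, all integers n ≥ 1, and all λ > 0: (i) if n ≤ c₀·q^m then C₁·max(λ/n, n^{-κ}) ≤ λ* ≤ C₂·max(λ/n, n^{-κ}); (ii) if n ≥ c₀'·q^m then C₃·λ/n ≤ λ* ≤ C₄·λ/n. -/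
/-!
Write `N(t) = ∑_{ℓ ≤ m} s_ℓ q^ℓ / (s_ℓ + t)`, so that `λ*` solves `n λ* = λ + λ* N(λ*)`.
The `ℓ`-th term of `t N(t)` is at most `min (t q^ℓ) (s_ℓ q^ℓ)`, and it is at least `t q^ℓ / 2`
when `t ≤ s_ℓ`. Since `N ≥ 0`, always `λ* ≥ λ / n`. Splitting the sum at `j` with `q^j ≍ n`
gives `λ* N(λ*) ≤ λ* n / 2 + O((q/p)^j)`, and `(q/p)^j = (q^j)^(1-κ) ≲ n^(1-κ)`, whence
`λ* ≲ λ/n + n^(-κ)` for all `n`. If `4 n ≤ q^m`, some `L ≤ m` has `2 n ≤ q^L ≤ 2 q n`; then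
`λ* > s_L ≳ p^(-L) = (q^L)^(-κ) ≳ n^(-κ)`, as otherwise the `L`-th term alone would exceed `n`.
If `2 q^(m+1) ≤ n`, then `N < q^(m+1) ≤ n / 2`, so `λ* ≤ 2 λ / n`.
-/

open Finset Real

noncomputable def effectiveDim (s : ℕ → ℝ) (q : ℝ) (m : ℕ) (t : ℝ) : ℝ :=
  ∑ ℓ ∈ range (m + 1), s ℓ * q ^ ℓ / (s ℓ + t)

theorem geom_sum_le_pow_sub_one {x : ℝ} (hx : 2 ≤ x) (k : ℕ) :
    ∑ i ∈ range k, x ^ i ≤ x ^ k - 1 := by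
  induction k with
  | zero => simp
  | succ k ih =>
    rw [sum_range_succ, pow_succ]
    nlinarith [one_le_pow₀ (show 1 ≤ x by linarith) (n := k)]

theorem pow_rpow_logb {b x : ℝ} (hb : 0 < b) (hb1 : b ≠ 1) (hx : 0 < x) (i : ℕ) :
    (b ^ i) ^ logb b x = x ^ i := by
  rw [← rpow_natCast, ← rpow_mul hb.le, mul_comm, rpow_mul hb.le, rpow_logb hb hb1 hx,
    rpow_natCast]

theorem exists_le_pow_le_mul {x y : ℝ} (hx : 1 ≤ x) (hy : 1 < y) {m : ℕ} (hxm : x < y ^ m) :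
    ∃ L ≤ m, x ≤ y ^ L ∧ y ^ L ≤ y * x := by
  obtain ⟨k, hkx, hxk⟩ := exists_nat_pow_near hx hy
  refine ⟨k + 1, ?_, hxk.le, ?_⟩
  · exact (pow_lt_pow_iff_right₀ hy).mp (hkx.trans_lt hxm)
  · rw [pow_succ']
    exact mul_le_mul_of_nonneg_left hkx (by linarith)

theorem exists_two_mul_pow_sub_one_le {x y : ℝ} (hx : 1 ≤ x) (hy : 2 ≤ y) :
    ∃ j : ℕ, 2 * (y ^ j - 1) ≤ x ∧ x ≤ y ^ (j + 2) := by
  obtain ⟨k, hkx, hxk⟩ := exists_nat_pow_near hx (by linarith : 1 < y)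
  rcases k with _ | j
  · refine ⟨0, by rw [pow_zero, sub_self, mul_zero]; linarith, hxk.le.trans ?_⟩
    exact pow_le_pow_right₀ (by linarith) (by norm_num)
  · refine ⟨j, ?_, hxk.le⟩
    rw [pow_succ] at hkx
    nlinarith [one_le_pow₀ (show 1 ≤ y by linarith) (n := j)]

theorem mul_div_add_le_right {a x t : ℝ} (ha : 0 ≤ a) (hx : 0 ≤ x) (ht : 0 < t) :
    a * x / (a + t) ≤ x := by
  rw [div_le_iff₀ (by linarith)]
  nlinarith

theorem mul_mul_div_add_le {a x t : ℝ} (ha : 0 ≤ a) (hx : 0 ≤ x) (ht : 0 < t) :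
    t * (a * x / (a + t)) ≤ a * x := by
  rw [mul_div_assoc', div_le_iff₀ (by linarith)]
  nlinarith [mul_nonneg ha hx]

theorem mul_eq_add_mul_of_sub_div_eq {a b t N : ℝ} (ht : t ≠ 0) (h : a - b / t = N) :
    a * t = b + t * N := by
  rw [← h]; field_simp; ring

theorem div_le_of_sub_div_eq {n lam t N : ℝ} (hN : 0 ≤ N) (hn : 0 < n) (ht : 0 < t)
    (h : n - lam / t = N) : lam / n ≤ t := by
  have := mul_eq_add_mul_of_sub_div_eq ht.ne' h
  rw [div_le_iff₀ hn]
  linarith [mul_nonneg ht.le hN]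

theorem le_two_mul_div_of_sub_div_eq {n lam t N : ℝ} (hN : 2 * N ≤ n) (hn : 0 < n) (ht : 0 < t)
    (h : n - lam / t = N) : t ≤ 2 * (lam / n) := by
  have := mul_eq_add_mul_of_sub_div_eq ht.ne' h
  rw [mul_div_assoc', le_div_iff₀ hn]
  linarith [mul_le_mul_of_nonneg_left hN ht.le]

theorem div_pow_le_mul_rpow_neg_logb {q p n : ℝ} (hq : 1 < q) (hqp : q ≤ p) (hn : 0 < n) {i : ℕ}
    (hni : n ≤ q ^ i) : (q / p) ^ i ≤ n * n ^ (-logb q p) := by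
  have hq0 : 0 < q := by linarith
  have hκ : 1 ≤ logb q p := by
    rw [← logb_self_eq_one hq]
    exact logb_le_logb_of_le hq hq0 hqp
  calc (q / p) ^ i = (q ^ i) ^ (1 - logb q p) := by
        rw [rpow_sub (by positivity), rpow_one, pow_rpow_logb hq0 hq.ne' (by linarith), div_pow]
    _ ≤ n ^ (1 - logb q p) := rpow_le_rpow_of_nonpos hn hni (by linarith)
    _ = n * n ^ (-logb q p) := by rw [sub_eq_add_neg, rpow_add hn, rpow_one]

section EffectiveDim

variable {s : ℕ → ℝ} {q p K₁ K₂ n lam t : ℝ} {m : ℕ}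

theorem effectiveDim_nonneg (hs : ∀ ℓ, 0 ≤ s ℓ) (hq : 0 ≤ q) (ht : 0 ≤ t) :
    0 ≤ effectiveDim s q m t :=
  sum_nonneg fun ℓ _ => div_nonneg (mul_nonneg (hs ℓ) (pow_nonneg hq ℓ)) (add_nonneg (hs ℓ) ht)

theorem pow_div_two_le_effectiveDim (hs : ∀ ℓ, 0 ≤ s ℓ) (hq : 0 ≤ q) (ht : 0 < t) {L : ℕ}
    (hL : L ≤ m) (htL : t ≤ s L) : q ^ L / 2 ≤ effectiveDim s q m t := by
  have hterm : q ^ L / 2 ≤ s L * q ^ L / (s L + t) := by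
    rw [div_le_div_iff₀ two_pos (by linarith)]
    nlinarith [pow_nonneg hq L]
  refine hterm.trans (single_le_sum (f := fun ℓ => s ℓ * q ^ ℓ / (s ℓ + t)) (fun ℓ _ => ?_)
    (mem_range.2 (Nat.lt_succ_of_le hL)))
  exact div_nonneg (mul_nonneg (hs ℓ) (pow_nonneg hq ℓ)) (add_nonneg (hs ℓ) ht.le)

theorem effectiveDim_lt_pow_succ (hs : ∀ ℓ, 0 ≤ s ℓ) (hq : 2 ≤ q) (ht : 0 < t) :
    effectiveDim s q m t < q ^ (m + 1) := by
  calc effectiveDim s q m t ≤ ∑ ℓ ∈ range (m + 1), q ^ ℓ :=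
        sum_le_sum fun ℓ _ => mul_div_add_le_right (hs ℓ) (by positivity) ht
    _ ≤ q ^ (m + 1) - 1 := geom_sum_le_pow_sub_one hq _
    _ < q ^ (m + 1) := by linarith

theorem mul_effectiveDim_le (hs : ∀ ℓ, 0 ≤ s ℓ ∧ s ℓ ≤ K₂ * p ^ (-(ℓ : ℝ))) (hq : 2 ≤ q)
    (hqp : q < p) (ht : 0 < t) (j : ℕ) :
    t * effectiveDim s q m t ≤ t * (q ^ j - 1) + K₂ / (1 - q / p) * (q / p) ^ j := by
  have hp : 0 < p := by linarith
  set f := fun ℓ => t * (s ℓ * q ^ ℓ / (s ℓ + t))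
  have hf_nonneg : ∀ ℓ, 0 ≤ f ℓ := fun ℓ =>
    mul_nonneg ht.le (div_nonneg (mul_nonneg (hs ℓ).1 (by positivity)) (by linarith [(hs ℓ).1]))
  have hf_pow : ∀ ℓ, f ℓ ≤ t * q ^ ℓ := fun ℓ =>
    mul_le_mul_of_nonneg_left (mul_div_add_le_right (hs ℓ).1 (by positivity) ht) ht.le
  have hf_decay : ∀ ℓ, f ℓ ≤ K₂ * (q / p) ^ ℓ := fun ℓ => by
    have hqℓ : 0 ≤ q ^ ℓ := by positivity
    calc f ℓ ≤ s ℓ * q ^ ℓ := mul_mul_div_add_le (hs ℓ).1 hqℓ ht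
      _ ≤ K₂ * p ^ (-(ℓ : ℝ)) * q ^ ℓ := by gcongr; exact (hs ℓ).2
      _ = K₂ * (q / p) ^ ℓ := by
          rw [rpow_neg hp.le, rpow_natCast, div_pow]; ring
  have hr : q / p < 1 := (div_lt_one hp).2 hqp
  calc t * effectiveDim s q m t = ∑ ℓ ∈ range (m + 1), f ℓ := mul_sum _ _ _
    _ ≤ ∑ ℓ ∈ range (max j (m + 1)), f ℓ :=
        sum_le_sum_of_subset_of_nonneg (range_subset_range.2 (le_max_right _ _))
          fun ℓ _ _ => hf_nonneg ℓ
    _ = ∑ ℓ ∈ range j, f ℓ + ∑ ℓ ∈ Ico j (max j (m + 1)), f ℓ :=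
        (sum_range_add_sum_Ico _ (le_max_left _ _)).symm
    _ ≤ t * ∑ ℓ ∈ range j, q ^ ℓ + K₂ * ∑ ℓ ∈ Ico j (max j (m + 1)), (q / p) ^ ℓ := by
        rw [mul_sum, mul_sum]
        exact add_le_add (sum_le_sum fun ℓ _ => hf_pow ℓ) (sum_le_sum fun ℓ _ => hf_decay ℓ)
    _ ≤ t * (q ^ j - 1) + K₂ * ((q / p) ^ j / (1 - q / p)) := by
        have hK₂ : 0 ≤ K₂ := by simpa using (hs 0).1.trans (hs 0).2
        gcongr
        · exact geom_sum_le_pow_sub_one hq j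
        · exact geom_sum_Ico_le_of_lt_one (by positivity) hr
    _ = t * (q ^ j - 1) + K₂ / (1 - q / p) * (q / p) ^ j := by ring

theorem rpow_neg_logb_le_of_sub_div_eq (hs : ∀ ℓ : ℕ, K₁ * p ^ (-(ℓ : ℝ)) ≤ s ℓ) (hK₁ : 0 < K₁)
    (hq : 1 < q) (hqp : q ≤ p) (hn : 1 ≤ n) (hnm : 4 * n ≤ q ^ m) (hlam : 0 < lam) (ht : 0 < t)
    (h : n - lam / t = effectiveDim s q m t) :
    K₁ * (2 * q) ^ (-logb q p) * n ^ (-logb q p) ≤ t := by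
  have hp : 0 < p := by linarith
  have hs0 : ∀ ℓ, 0 ≤ s ℓ := fun ℓ => (by positivity : 0 ≤ K₁ * p ^ (-(ℓ : ℝ))).trans (hs ℓ)
  obtain ⟨L, hLm, hnL, hLn⟩ :=
    exists_le_pow_le_mul (x := 2 * n) (by linarith) hq (m := m) (by linarith)
  have hsL : s L < t := by
    by_contra! htL
    have := pow_div_two_le_effectiveDim hs0 (q := q) (by linarith) ht hLm htL
    have : 0 < lam / t := div_pos hlam ht
    linarith
  calc K₁ * (2 * q) ^ (-logb q p) * n ^ (-logb q p) = K₁ * (q * (2 * n)) ^ (-logb q p) := by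
        rw [mul_assoc, ← mul_rpow (by linarith) (by linarith)]; ring_nf
    _ ≤ K₁ * (q ^ L) ^ (-logb q p) := by
        refine mul_le_mul_of_nonneg_left (rpow_le_rpow_of_nonpos (by linarith) hLn ?_) hK₁.le
        exact neg_nonpos.2 (logb_nonneg hq (hq.le.trans hqp))
    _ = K₁ * p ^ (-(L : ℝ)) := by
        rw [rpow_neg (by positivity), pow_rpow_logb (by linarith) hq.ne' hp, rpow_neg hp.le,
          rpow_natCast]
    _ ≤ s L := hs L
    _ ≤ t := hsL.le

theorem le_mul_max_of_sub_div_eq (hs : ∀ ℓ, 0 ≤ s ℓ ∧ s ℓ ≤ K₂ * p ^ (-(ℓ : ℝ))) (hq : 2 ≤ q)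
    (hqp : q < p) (hn : 1 ≤ n) (ht : 0 < t) (h : n - lam / t = effectiveDim s q m t) :
    t ≤ (2 + 2 * (K₂ / (1 - q / p)) * (p / q) ^ 2) * max (lam / n) (n ^ (-logb q p)) := by
  have hp : 0 < p := by linarith
  have hK₂ : 0 ≤ K₂ := by simpa using (hs 0).1.trans (hs 0).2
  have hA : 0 ≤ K₂ / (1 - q / p) := div_nonneg hK₂ (sub_nonneg.2 ((div_le_one hp).2 hqp.le))
  obtain ⟨j, hjn, hnj⟩ := exists_two_mul_pow_sub_one_le hn hq
  have hsplit := mul_effectiveDim_le hs hq hqp ht j (m := m)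
  have hdecay : (q / p) ^ j ≤ (p / q) ^ 2 * (n * n ^ (-logb q p)) := by
    calc (q / p) ^ j = (p / q) ^ 2 * (q / p) ^ (j + 2) := by
          rw [pow_add, div_pow q p 2]; field_simp
      _ ≤ (p / q) ^ 2 * (n * n ^ (-logb q p)) := by
          gcongr
          exact div_pow_le_mul_rpow_neg_logb (by linarith) hqp.le (by linarith) hnj
  have hbalance := mul_eq_add_mul_of_sub_div_eq ht.ne' h
  have hbound :
      n * t ≤ 2 * lam + 2 * (K₂ / (1 - q / p) * (p / q) ^ 2) * (n * n ^ (-logb q p)) := by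
    nlinarith [mul_le_mul_of_nonneg_left hjn ht.le, mul_le_mul_of_nonneg_left hdecay hA]
  have hlamM : lam / n ≤ max (lam / n) (n ^ (-logb q p)) := le_max_left _ _
  have hκM : n ^ (-logb q p) ≤ max (lam / n) (n ^ (-logb q p)) := le_max_right _ _
  rw [div_le_iff₀ (by linarith : 0 < n)] at hlamM
  rw [← mul_le_mul_iff_of_pos_left (by linarith : 0 < n)]
  have hB : 0 ≤ 2 * (K₂ / (1 - q / p) * (p / q) ^ 2) * n := by positivity
  nlinarith [mul_le_mul_of_nonneg_left hκM hB]

end EffectiveDim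

/-- Order of the effective regularization `λ*`, the unique positive solution of
`n − λ/λ* = Σ_{ℓ=0}^m s_ℓ q^ℓ/(s_ℓ+λ*)`: if `n ≤ c₀ q^m` then `λ* ≍ max(λ/n, n^{-κ})`,
and if `n ≥ c₀' q^m` then `λ* ≍ λ/n`, with constants depending only on `q, p, K₁, K₂`
and `κ = log p / log q`. -/
theorem effective_regularization_order
    (q : ℕ) (hq : 2 ≤ q) (p K₁ K₂ : ℝ) (hpq : (q : ℝ) < p)
    (hK₁ : 0 < K₁) (hK₁₂ : K₁ ≤ K₂) :
    ∃ c₀ c₀' C₁ C₂ C₃ C₄ : ℝ,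
      0 < c₀ ∧ c₀ < 1 ∧ 1 ≤ c₀' ∧ 0 < C₁ ∧ C₁ ≤ C₂ ∧ 0 < C₃ ∧ C₃ ≤ C₄ ∧
      ∀ s : ℕ → ℝ,
        (∀ ℓ : ℕ, K₁ * p ^ (-(ℓ : ℝ)) ≤ s ℓ ∧ s ℓ ≤ K₂ * p ^ (-(ℓ : ℝ))) →
        ∀ m n : ℕ, 1 ≤ n → ∀ lam : ℝ, 0 < lam →
        ∀ lamstar : ℝ, 0 < lamstar →
          ((n : ℝ) - lam / lamstar
              = ∑ ℓ ∈ range (m + 1), s ℓ * (q : ℝ) ^ ℓ / (s ℓ + lamstar)) →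
          (((n : ℝ) ≤ c₀ * (q : ℝ) ^ m →
            C₁ * max (lam / n) ((n : ℝ) ^ (-(Real.log p / Real.log q))) ≤ lamstar ∧
            lamstar ≤ C₂ * max (lam / n) ((n : ℝ) ^ (-(Real.log p / Real.log q)))) ∧
          (c₀' * (q : ℝ) ^ m ≤ (n : ℝ) →
            C₃ * (lam / n) ≤ lamstar ∧ lamstar ≤ C₄ * (lam / n))) := by
  have hq' : (2 : ℝ) ≤ q := by exact_mod_cast hq
  have hp : 0 < p := by linarith
  have hA : 0 ≤ K₂ / (1 - q / p) :=
    div_nonneg (by linarith) (sub_nonneg.2 ((div_le_one hp).2 hpq.le))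
  have hC₁ : 0 < min 1 (K₁ * (2 * q) ^ (-logb q p)) := lt_min one_pos (by positivity)
  refine ⟨1 / 4, 2 * q, min 1 (K₁ * (2 * q) ^ (-logb q p)),
    2 + 2 * (K₂ / (1 - q / p)) * (p / q) ^ 2, 1, 2, by norm_num, by norm_num, by linarith, hC₁,
    ?_, one_pos, one_le_two, ?_⟩
  · have := mul_nonneg hA (sq_nonneg (p / q))
    exact (min_le_left _ _).trans (by linarith)
  intro s hs m n hn lam hlam t ht h
  change _ = effectiveDim s q m t at h
  have hn' : (1 : ℝ) ≤ n := by exact_mod_cast hn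
  have hs0 : ∀ ℓ, 0 ≤ s ℓ := fun ℓ => (by positivity : 0 ≤ K₁ * p ^ (-(ℓ : ℝ))).trans (hs ℓ).1
  have hlower : lam / n ≤ t :=
    div_le_of_sub_div_eq (effectiveDim_nonneg hs0 (by linarith) ht.le) (by linarith) ht h
  have hupper := le_mul_max_of_sub_div_eq (fun ℓ => ⟨hs0 ℓ, (hs ℓ).2⟩) hq' hpq hn' ht h
  refine ⟨fun hnm => ⟨?_, hupper⟩, fun hnm => ⟨by rwa [one_mul], ?_⟩⟩
  · have hκ := rpow_neg_logb_le_of_sub_div_eq (fun ℓ => (hs ℓ).1) hK₁ (by linarith) hpq.le hn'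
      (by linarith) hlam ht h
    rw [mul_max_of_nonneg _ _ hC₁.le]
    refine max_le ?_ ?_
    · exact (mul_le_of_le_one_left (div_pos hlam (by linarith)).le (min_le_left _ _)).trans hlower
    · exact (mul_le_mul_of_nonneg_right (min_le_right _ _) (by positivity)).trans hκ
  · refine le_two_mul_div_of_sub_div_eq ?_ (by linarith) ht h
    have := effectiveDim_lt_pow_succ hs0 hq' ht (m := m)
    rw [pow_succ] at this
    linarith
end

section
/- There exists a constant c₁ ∈ (0,1) depending only on q, p, K₁, K₂ such that for every integer m ≥ 0 and every u ∈ (0,1) with ℓ_u ≤ m: Σ_{ℓ=0}^{m} s_ℓ² q^{ℓ}/(s_ℓ + u)² ≤ (1 − c₁) · Σ_{ℓ=0}^{m} s_ℓ q^{ℓ}/(s_ℓ + u). -/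
open Finset

/-! With `θ_ℓ = s_ℓ / (s_ℓ + u) ∈ [0, 1]` the two sums are `∑ θ_ℓ² q^ℓ` and `∑ θ_ℓ q^ℓ`.
At the critical scale `ℓ = ℓ_u` one has `s_ℓ ≍ u`, so `θ_{ℓ_u}` stays away from both `0` and `1`:
squaring loses a fixed fraction of the term `ℓ_u`, and that term is `≍ q^{ℓ_u}`. It is a fixed
fraction of the whole sum, since `θ_ℓ q^ℓ ≤ q^ℓ` (geometric below `ℓ_u`, as `q ≥ 2`) and
`θ_ℓ q^ℓ ≤ s_ℓ q^ℓ / u ≤ K₂ p^{ℓ_u + 1} (q / p)^ℓ` (geometric above `ℓ_u`, as `q < p`). -/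

theorem sum_sq_mul_le_one_sub_mul_sum {ι : Type*} {S : Finset ι} {θ w : ι → ℝ} {j : ι}
    {c δ : ℝ} (hθ₀ : ∀ i ∈ S, 0 ≤ θ i) (hθ₁ : ∀ i ∈ S, θ i ≤ 1) (hw : ∀ i ∈ S, 0 ≤ w i)
    (hj : j ∈ S) (hθj : θ j ≤ 1 - δ) (hc : c * ∑ i ∈ S, θ i * w i ≤ δ * (θ j * w j)) :
    ∑ i ∈ S, θ i ^ 2 * w i ≤ (1 - c) * ∑ i ∈ S, θ i * w i := by
  classical
  have hterm : ∀ i ∈ S, θ i ^ 2 * w i ≤ θ i * w i := fun i hi ↦ by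
    rw [sq, mul_assoc]
    exact mul_le_of_le_one_left (mul_nonneg (hθ₀ i hi) (hw i hi)) (hθ₁ i hi)
  have hjterm : θ j ^ 2 * w j ≤ (1 - δ) * (θ j * w j) := by
    rw [sq, mul_assoc]
    exact mul_le_mul_of_nonneg_right hθj (mul_nonneg (hθ₀ j hj) (hw j hj))
  have hrest : ∑ i ∈ S.erase j, θ i ^ 2 * w i ≤ ∑ i ∈ S.erase j, θ i * w i :=
    sum_le_sum fun i hi ↦ hterm i (mem_of_mem_erase hi)
  have hsq := add_sum_erase S (fun i ↦ θ i ^ 2 * w i) hj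
  have hlin := add_sum_erase S (fun i ↦ θ i * w i) hj
  linarith

theorem div_add_le_one_sub {p K u s : ℝ} {n : ℕ} (hp : 0 < p) (hs₀ : 0 ≤ s)
    (hs : s ≤ K / p ^ n) (hu₁ : 1 / p ^ (n + 1) ≤ u) (hu₂ : u < 1 / p ^ n) :
    s / (s + u) ≤ 1 - 1 / (p * (K + 1)) := by
  have hu : 0 < u := lt_of_lt_of_le (by positivity) hu₁
  have hK : 0 ≤ K := by simpa using (le_div_iff₀ (pow_pos hp n)).1 (hs₀.trans hs)
  have hsum : s + u ≤ (K + 1) * (p * u) := by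
    have : 1 / p ^ n ≤ p * u := by
      rw [pow_succ, ← div_div, div_le_iff₀ hp] at hu₁; linarith
    calc s + u ≤ K / p ^ n + 1 / p ^ n := by linarith
      _ = (K + 1) * (1 / p ^ n) := by ring
      _ ≤ (K + 1) * (p * u) := by gcongr
  have hδ : 1 / (p * (K + 1)) ≤ u / (s + u) := by
    rw [div_le_div_iff₀ (by positivity) (by positivity)]; linarith
  have : s / (s + u) = 1 - u / (s + u) := by field_simp; ring
  linarith

theorem div_div_add_one_le_div_add {K u s : ℝ} {p : ℝ} {n : ℕ} (hK : 0 ≤ K) (hs : K / p ^ n ≤ s)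
    (hu₀ : 0 < u) (hu₂ : u < 1 / p ^ n) : K / (K + 1) ≤ s / (s + u) := by
  have hKu : K * u ≤ s :=
    calc K * u ≤ K * (1 / p ^ n) := by gcongr
      _ = K / p ^ n := by ring
      _ ≤ s := hs
  have hs₀ : 0 ≤ s := (mul_nonneg hK hu₀.le).trans hKu
  rw [div_le_div_iff₀ (by positivity) (by positivity)]
  linarith

theorem sum_div_add_mul_pow_le {q : ℕ} {p K u : ℝ} {s : ℕ → ℝ} {n m : ℕ} (hq : 2 ≤ q)
    (hpq : (q : ℝ) < p) (hs₀ : ∀ ℓ, 0 ≤ s ℓ) (hs : ∀ ℓ, s ℓ ≤ K / p ^ ℓ)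
    (hu : 1 / p ^ (n + 1) ≤ u) (hnm : n ≤ m) :
    ∑ ℓ ∈ range (m + 1), s ℓ / (s ℓ + u) * (q : ℝ) ^ ℓ
      ≤ (1 + K * p / (p - q)) * (q : ℝ) ^ (n + 1) := by
  have hp : 0 < p := lt_of_le_of_lt (Nat.cast_nonneg q) hpq
  have hu₀ : 0 < u := lt_of_lt_of_le (by positivity) hu
  have hθ₁ : ∀ ℓ, s ℓ / (s ℓ + u) ≤ 1 := fun ℓ ↦
    div_le_one_of_le₀ (by linarith) (by linarith [hs₀ ℓ])
  have hhead : ∑ ℓ ∈ range (n + 1), s ℓ / (s ℓ + u) * (q : ℝ) ^ ℓ ≤ (q : ℝ) ^ (n + 1) :=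
    calc _ ≤ ∑ ℓ ∈ range (n + 1), (q : ℝ) ^ ℓ :=
          sum_le_sum fun ℓ _ ↦ mul_le_of_le_one_left (by positivity) (hθ₁ ℓ)
      _ ≤ (q : ℝ) ^ (n + 1) := by
          exact_mod_cast (Nat.geomSum_lt hq fun k hk ↦ mem_range.1 hk).le
  have hterm : ∀ ℓ, s ℓ / (s ℓ + u) * (q : ℝ) ^ ℓ ≤ K * p ^ (n + 1) * ((q : ℝ) / p) ^ ℓ := by
    intro ℓ
    have hinv : 1 / u ≤ p ^ (n + 1) := (one_div_le hu₀ (by positivity)).2 hu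
    calc s ℓ / (s ℓ + u) * (q : ℝ) ^ ℓ ≤ s ℓ * (1 / u) * (q : ℝ) ^ ℓ := by
          rw [mul_one_div]; gcongr <;> linarith [hs₀ ℓ]
      _ ≤ K / p ^ ℓ * p ^ (n + 1) * (q : ℝ) ^ ℓ := by
          gcongr
          exacts [(hs₀ ℓ).trans (hs ℓ), hs ℓ]
      _ = K * p ^ (n + 1) * ((q : ℝ) / p) ^ ℓ := by rw [div_pow]; ring
  have htail : ∑ ℓ ∈ Ico (n + 1) (m + 1), s ℓ / (s ℓ + u) * (q : ℝ) ^ ℓ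
      ≤ K * p / (p - q) * (q : ℝ) ^ (n + 1) := by
    have hK : 0 ≤ K := by simpa using (hs₀ 0).trans (hs 0)
    have hqp : (q : ℝ) / p < 1 := (div_lt_one hp).2 hpq
    calc _ ≤ ∑ ℓ ∈ Ico (n + 1) (m + 1), K * p ^ (n + 1) * ((q : ℝ) / p) ^ ℓ :=
          sum_le_sum fun ℓ _ ↦ hterm ℓ
      _ = K * p ^ (n + 1) * ∑ ℓ ∈ Ico (n + 1) (m + 1), ((q : ℝ) / p) ^ ℓ := by rw [mul_sum]
      _ ≤ K * p ^ (n + 1) * (((q : ℝ) / p) ^ (n + 1) / (1 - q / p)) := by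
          gcongr; exact geom_sum_Ico_le_of_lt_one (by positivity) hqp
      _ = K * p / (p - q) * (q : ℝ) ^ (n + 1) := by
          rw [div_pow]; field_simp
  rw [← sum_range_add_sum_Ico _ (by omega : n + 1 ≤ m + 1)]
  linarith

/-- For `u ∈ (0,1)` with `ℓ_u ≤ m` (where `p^{-(ℓ_u+1)} ≤ u < p^{-ℓ_u}`),
`D(u) = Σ_{ℓ=0}^m s_ℓ² q^ℓ/(s_ℓ+u)² ≤ (1 − c₁) F(u)` where
`F(u) = Σ_{ℓ=0}^m s_ℓ q^ℓ/(s_ℓ+u)`, with `c₁ ∈ (0,1)` depending only on `q, p, K₁, K₂`. -/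
theorem D_le_F_strict_fraction
    (q : ℕ) (hq : 2 ≤ q) (p K₁ K₂ : ℝ) (hpq : (q : ℝ) < p)
    (hK₁ : 0 < K₁) (hK₁₂ : K₁ ≤ K₂) :
    ∃ c₁ : ℝ, 0 < c₁ ∧ c₁ < 1 ∧
      ∀ s : ℕ → ℝ,
        (∀ ℓ : ℕ, K₁ * p ^ (-(ℓ : ℝ)) ≤ s ℓ ∧ s ℓ ≤ K₂ * p ^ (-(ℓ : ℝ))) →
        ∀ m : ℕ, ∀ u : ℝ, 0 < u → u < 1 →
        ∀ lu : ℕ, p ^ (-((lu : ℝ) + 1)) ≤ u → u < p ^ (-(lu : ℝ)) → lu ≤ m →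
          ∑ ℓ ∈ range (m + 1), (s ℓ) ^ 2 * (q : ℝ) ^ ℓ / (s ℓ + u) ^ 2
            ≤ (1 - c₁) * ∑ ℓ ∈ range (m + 1), s ℓ * (q : ℝ) ^ ℓ / (s ℓ + u) := by
  have hq' : (2 : ℝ) ≤ q := by exact_mod_cast hq
  have hp : 0 < p := by linarith
  have hK₂ : 0 ≤ K₂ := hK₁.le.trans hK₁₂
  set δ := 1 / (p * (K₂ + 1))
  set r := K₁ / (K₁ + 1)
  set B := 1 + K₂ * p / (p - q)
  have hB : 1 ≤ B := le_add_of_nonneg_right (div_nonneg (by positivity) (by linarith))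
  refine ⟨δ * r / (q * B), by positivity, ?_, ?_⟩
  · have hδ : δ < 1 := by rw [div_lt_one (by positivity)]; nlinarith
    have hr : r < 1 := by rw [div_lt_one (by positivity)]; linarith
    rw [div_lt_one (by positivity)]
    nlinarith [mul_lt_one_of_nonneg_of_lt_one_left (by positivity : 0 ≤ δ) hδ hr.le]
  intro s hs m u hu₀ _ lu hlu₁ hlu₂ hlum
  simp only [Real.rpow_neg_natCast, zpow_neg, zpow_natCast, ← one_div, mul_one_div] at hs hlu₂
  rw [← Nat.cast_add_one, Real.rpow_neg_natCast, zpow_neg, zpow_natCast, ← one_div] at hlu₁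
  have hs₀ : ∀ ℓ, 0 ≤ s ℓ := fun ℓ ↦ (by positivity : 0 ≤ K₁ / p ^ ℓ).trans (hs ℓ).1
  have hθ : ∀ ℓ ∈ range (m + 1),
      s ℓ ^ 2 * (q : ℝ) ^ ℓ / (s ℓ + u) ^ 2 = (s ℓ / (s ℓ + u)) ^ 2 * (q : ℝ) ^ ℓ :=
    fun ℓ _ ↦ by rw [div_pow, div_mul_eq_mul_div]
  rw [sum_congr rfl hθ, sum_congr rfl fun ℓ _ ↦ mul_div_right_comm (s ℓ) _ _]
  refine sum_sq_mul_le_one_sub_mul_sum (j := lu) (δ := δ)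
    (fun ℓ _ ↦ div_nonneg (hs₀ ℓ) (by linarith [hs₀ ℓ]))
    (fun ℓ _ ↦ div_le_one_of_le₀ (by linarith) (by linarith [hs₀ ℓ])) (fun ℓ _ ↦ by positivity)
    (mem_range.2 (by omega)) (div_add_le_one_sub hp (hs₀ lu) (hs lu).2 hlu₁ hlu₂) ?_
  calc δ * r / (q * B) * ∑ ℓ ∈ range (m + 1), s ℓ / (s ℓ + u) * (q : ℝ) ^ ℓ
      ≤ δ * r / (q * B) * (B * (q : ℝ) ^ (lu + 1)) := by
        gcongr
        exact sum_div_add_mul_pow_le hq hpq hs₀ (fun ℓ ↦ (hs ℓ).2) hlu₁ hlum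
    _ = δ * (r * (q : ℝ) ^ lu) := by field_simp; ring
    _ ≤ δ * (s lu / (s lu + u) * (q : ℝ) ^ lu) := by
        gcongr
        exact div_div_add_one_le_div_add hK₁.le (hs lu).1 hu₀ hlu₂
end

section
/- Assume r·p < 1. There exist constants 0 < C₁ ≤ C₂ depending only on p, r, K₁, K₂, K̃₁, K̃₂ such that for every integer m ≥ 0 and every u ∈ (0,1): C₁ ≤ Σ_{ℓ=0}^{m} s_ℓ‖θ^{(ℓ)}‖²/(s_ℓ + u)² ≤ C₂. -/
open Finset

/-!
The `ℓ = 0` term alone is bounded below by `K₁ K̃₁ / (K₂ + 1)²`, since `s₀ ≍ 1` and `u < 1`.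
Dropping `u` from the denominator bounds the `ℓ`-th term by `‖θ^{(ℓ)}‖² / s_ℓ ≲ (r p)^ℓ`, and
`r p < 1` makes these bounds summable.
-/

lemma div_le_mul_div_add_sq {a b c s t u : ℝ} (ha : 0 < a) (hc : 0 ≤ c) (has : a ≤ s)
    (hsb : s ≤ b) (hct : c ≤ t) (hu₀ : 0 ≤ u) (hu₁ : u ≤ 1) :
    a * c / (b + 1) ^ 2 ≤ s * t / (s + u) ^ 2 := by
  have hs : 0 < s := ha.trans_le has
  exact div_le_div₀ (mul_nonneg hs.le (hc.trans hct)) (mul_le_mul has hct hc hs.le)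
    (by positivity) (pow_le_pow_left₀ (by positivity) (by linarith) 2)

lemma mul_div_add_sq_le_div {s t u : ℝ} (hs : 0 < s) (ht : 0 ≤ t) (hu : 0 ≤ u) :
    s * t / (s + u) ^ 2 ≤ t / s :=
  calc s * t / (s + u) ^ 2 ≤ s * t / s ^ 2 :=
        div_le_div_of_nonneg_left (by positivity) (by positivity)
          (pow_le_pow_left₀ hs.le (by linarith) 2)
    _ = t / s := by field_simp

lemma div_le_mul_pow_of_le_mul_rpow_neg {A B p r s t : ℝ} (ℓ : ℕ) (hA : 0 < A) (hp : 0 < p)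
    (ht : 0 ≤ t) (htB : t ≤ B * r ^ ℓ) (hAs : A * p ^ (-(ℓ : ℝ)) ≤ s) :
    t / s ≤ B / A * (r * p) ^ ℓ :=
  calc t / s ≤ B * r ^ ℓ / (A * p ^ (-(ℓ : ℝ))) :=
        div_le_div₀ (ht.trans htB) htB (mul_pos hA (Real.rpow_pos_of_pos hp _)) hAs
    _ = B / A * (r * p) ^ ℓ := by
        rw [Real.rpow_neg hp.le, Real.rpow_natCast, mul_pow]
        field_simp

lemma sum_range_le_div_one_sub_of_le_mul_pow {f : ℕ → ℝ} {C x : ℝ} (hC : 0 ≤ C) (hx₀ : 0 ≤ x)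
    (hx₁ : x < 1) (hf : ∀ ℓ, f ℓ ≤ C * x ^ ℓ) (n : ℕ) :
    ∑ ℓ ∈ range n, f ℓ ≤ C / (1 - x) :=
  calc ∑ ℓ ∈ range n, f ℓ ≤ C * ∑ ℓ ∈ range n, x ^ ℓ := by
        rw [mul_sum]
        exact sum_le_sum fun ℓ _ => hf ℓ
    _ ≤ C * (x ^ 0 / (1 - x)) := by
        rw [range_eq_Ico]
        exact mul_le_mul_of_nonneg_left (geom_sum_Ico_le_of_lt_one hx₀ hx₁) hC
    _ = C / (1 - x) := by rw [pow_zero, mul_one_div]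

theorem weighted_theta_sum_order_general
    (q : ℕ) (p r K₁ K₂ Kt₁ Kt₂ : ℝ) (hpq : (q : ℝ) < p)
    (hr0 : 0 < r)
    (hK₁ : 0 < K₁) (hK₁₂ : K₁ ≤ K₂) (hKt₁ : 0 < Kt₁) (hKt₁₂ : Kt₁ ≤ Kt₂)
    (hrp : r * p < 1) :
    ∃ C₁ C₂ : ℝ, 0 < C₁ ∧ C₁ ≤ C₂ ∧
      ∀ s : ℕ → ℝ,
        (∀ ℓ : ℕ, K₁ * p ^ (-(ℓ : ℝ)) ≤ s ℓ ∧ s ℓ ≤ K₂ * p ^ (-(ℓ : ℝ))) →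
        ∀ θ : (ℓ : ℕ) → Fin (q ^ ℓ) → ℝ,
        (∀ ℓ : ℕ, Kt₁ * r ^ ℓ ≤ ∑ j, (θ ℓ j) ^ 2 ∧ ∑ j, (θ ℓ j) ^ 2 ≤ Kt₂ * r ^ ℓ) →
        ∀ m : ℕ, ∀ u : ℝ, 0 < u → u < 1 →
          C₁ ≤ ∑ ℓ ∈ range (m + 1), s ℓ * (∑ j, (θ ℓ j) ^ 2) / (s ℓ + u) ^ 2 ∧
          ∑ ℓ ∈ range (m + 1), s ℓ * (∑ j, (θ ℓ j) ^ 2) / (s ℓ + u) ^ 2 ≤ C₂ := by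
  have hp : 0 < p := (Nat.cast_nonneg q).trans_lt hpq
  have hK₂ : 0 < K₂ := hK₁.trans_le hK₁₂
  refine ⟨K₁ * Kt₁ / (K₂ + 1) ^ 2, max (K₁ * Kt₁ / (K₂ + 1) ^ 2) (Kt₂ / K₁ / (1 - r * p)),
    by positivity, le_max_left _ _, fun s hs θ hθ m u hu₀ hu₁ => ?_⟩
  have hs_pos ℓ : 0 < s ℓ := (mul_pos hK₁ (Real.rpow_pos_of_pos hp _)).trans_le (hs ℓ).1
  constructor
  · have hs₀ : K₁ ≤ s 0 ∧ s 0 ≤ K₂ := by simpa using hs 0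
    have hθ₀ : Kt₁ ≤ ∑ j, (θ 0 j) ^ 2 := by simpa using (hθ 0).1
    calc K₁ * Kt₁ / (K₂ + 1) ^ 2 ≤ s 0 * (∑ j, (θ 0 j) ^ 2) / (s 0 + u) ^ 2 :=
          div_le_mul_div_add_sq hK₁ hKt₁.le hs₀.1 hs₀.2 hθ₀ hu₀.le hu₁.le
      _ ≤ ∑ ℓ ∈ range (m + 1), s ℓ * (∑ j, (θ ℓ j) ^ 2) / (s ℓ + u) ^ 2 :=
          single_le_sum (f := fun ℓ ↦ s ℓ * (∑ j, (θ ℓ j) ^ 2) / (s ℓ + u) ^ 2)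
            (fun ℓ _ => by have := hs_pos ℓ; positivity) (by simp)
  · refine le_max_of_le_right (sum_range_le_div_one_sub_of_le_mul_pow
      (div_nonneg (hKt₁.le.trans hKt₁₂) hK₁.le) (by positivity) hrp (fun ℓ => ?_) _)
    have hθ_nonneg : 0 ≤ ∑ j, (θ ℓ j) ^ 2 := by positivity
    exact (mul_div_add_sq_le_div (hs_pos ℓ) hθ_nonneg hu₀.le).trans
      (div_le_mul_pow_of_le_mul_rpow_neg ℓ hK₁ hp hθ_nonneg (hθ ℓ).2 (hs ℓ).1)

/-- If `r·p < 1` then `Σ_{ℓ=0}^m s_ℓ‖θ^{(ℓ)}‖²/(s_ℓ+u)²` is bounded above and below by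
positive constants depending only on `p, r, K₁, K₂, K̃₁, K̃₂`, uniformly over `m ≥ 0`
and `u ∈ (0,1)`. -/
theorem weighted_theta_sum_order
    (q : ℕ) (hq : 2 ≤ q) (p r K₁ K₂ Kt₁ Kt₂ : ℝ) (hpq : (q : ℝ) < p)
    (hr0 : 0 < r) (hr1 : r < 1)
    (hK₁ : 0 < K₁) (hK₁₂ : K₁ ≤ K₂) (hKt₁ : 0 < Kt₁) (hKt₁₂ : Kt₁ ≤ Kt₂)
    (hrp : r * p < 1) :
    ∃ C₁ C₂ : ℝ, 0 < C₁ ∧ C₁ ≤ C₂ ∧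
      ∀ s : ℕ → ℝ,
        (∀ ℓ : ℕ, K₁ * p ^ (-(ℓ : ℝ)) ≤ s ℓ ∧ s ℓ ≤ K₂ * p ^ (-(ℓ : ℝ))) →
        ∀ θ : (ℓ : ℕ) → Fin (q ^ ℓ) → ℝ,
        (∀ ℓ : ℕ, Kt₁ * r ^ ℓ ≤ ∑ j, (θ ℓ j) ^ 2 ∧ ∑ j, (θ ℓ j) ^ 2 ≤ Kt₂ * r ^ ℓ) →
        ∀ m : ℕ, ∀ u : ℝ, 0 < u → u < 1 →
          C₁ ≤ ∑ ℓ ∈ range (m + 1), s ℓ * (∑ j, (θ ℓ j) ^ 2) / (s ℓ + u) ^ 2 ∧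
          ∑ ℓ ∈ range (m + 1), s ℓ * (∑ j, (θ ℓ j) ^ 2) / (s ℓ + u) ^ 2 ≤ C₂ :=
  weighted_theta_sum_order_general q p r K₁ K₂ Kt₁ Kt₂ hpq hr0 hK₁ hK₁₂ hKt₁ hKt₁₂ hrp
end

section
/- Define b_ℓ := (q^ℓ − 1)/(q − 1) for ℓ ≥ 0, and define the sequence (σ_i)_{i≥1} by σ_i := s_ℓ whenever b_ℓ < i ≤ b_{ℓ+1} (so block ℓ contributes q^ℓ consecutive entries equal to s_ℓ). Then Σ_{i≥1} σ_i < ∞, and there exist constants C, C' > 0 depending only on q, p, K₁, K₂ such that: (i) for every ℓ ≥ 0 and every integer k with b_ℓ < k ≤ b_{ℓ+1}, Σ_{i≥k} σ_i ≤ C·q^{ℓ}·σ_k; (ii) for every integer k ≥ 1, Σ_{i≥k} σ_i ≤ C'·k·σ_k. -/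
open Finset

/-!
Block `ℓ` consists of `q ^ ℓ` copies of `s ℓ ≍ p ^ (-ℓ)`, so it carries mass `≍ (q / p) ^ ℓ`.
Since `q < p` these masses decay geometrically: the tail from any index `k` of block `ℓ` is at most
a constant times `(q / p) ^ ℓ`, i.e. a constant times `q ^ ℓ σ_k`. As `q ^ ℓ` is at most
`(q - 1) k` for `k` in block `ℓ`, this is also `O(k σ_k)`.
-/

def blockStart (q ℓ : ℕ) : ℕ := ∑ j ∈ range ℓ, q ^ j

def IsBlockSeq (q : ℕ) (s σ : ℕ → ℝ) : Prop :=
  ∀ ℓ i, blockStart q ℓ < i → i ≤ blockStart q (ℓ + 1) → σ i = s ℓ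

lemma exists_lt_le_succ_of_exists_le {b : ℕ → ℕ} (h0 : b 0 = 0) {k : ℕ} (hk : 0 < k)
    (hb : ∃ L, k ≤ b L) : ∃ ℓ, b ℓ < k ∧ k ≤ b (ℓ + 1) := by
  classical
  obtain ⟨ℓ, hℓ⟩ : ∃ ℓ, Nat.find hb = ℓ + 1 :=
    Nat.exists_eq_succ_of_ne_zero fun h => by have := Nat.find_spec hb; simp_all
  refine ⟨ℓ, not_le.1 (Nat.find_min hb (by omega)), hℓ ▸ Nat.find_spec hb⟩

section blockStart

variable {q : ℕ}

lemma blockStart_zero (q : ℕ) : blockStart q 0 = 0 := rfl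

lemma blockStart_succ (q ℓ : ℕ) : blockStart q (ℓ + 1) = blockStart q ℓ + q ^ ℓ :=
  sum_range_succ _ ℓ

lemma blockStart_mono (q : ℕ) : Monotone (blockStart q) := fun _ _ h =>
  sum_le_sum_of_subset (range_subset_range.2 h)

lemma le_blockStart (hq : 1 ≤ q) (ℓ : ℕ) : ℓ ≤ blockStart q ℓ := calc
  ℓ = ∑ _j ∈ range ℓ, 1 := by simp
  _ ≤ blockStart q ℓ := sum_le_sum fun j _ => Nat.one_le_pow j q hq

lemma exists_blockStart_lt_le_succ (hq : 1 ≤ q) {k : ℕ} (hk : 0 < k) :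
    ∃ ℓ, blockStart q ℓ < k ∧ k ≤ blockStart q (ℓ + 1) :=
  exists_lt_le_succ_of_exists_le (blockStart_zero q) hk ⟨k, le_blockStart hq k⟩

lemma pow_le_pred_mul_of_blockStart_lt (hq : 2 ≤ q) {ℓ k : ℕ} (hk : blockStart q ℓ < k) :
    (q : ℝ) ^ ℓ ≤ ((q : ℝ) - 1) * k := by
  obtain ⟨d, rfl⟩ : ∃ d, q = d + 1 := ⟨q - 1, by omega⟩
  have key : (d + 1) ^ ℓ ≤ d * k := calc
    (d + 1) ^ ℓ = blockStart (d + 1) ℓ * d + 1 := (geom_sum_mul_add d ℓ).symm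
    _ ≤ (blockStart (d + 1) ℓ + 1) * d := by rw [add_one_mul]; omega
    _ ≤ k * d := Nat.mul_le_mul_right d hk
    _ = d * k := mul_comm k d
  rw [show ((d + 1 : ℕ) : ℝ) - 1 = d by push_cast; ring]
  exact_mod_cast key

end blockStart

namespace IsBlockSeq

variable {q : ℕ} {s σ : ℕ → ℝ}

lemma sum_Ioc_blockStart (hσ : IsBlockSeq q s σ) {a L : ℕ} (h : a ≤ L) :
    ∑ i ∈ Ioc (blockStart q a) (blockStart q L), σ i = ∑ m ∈ Ico a L, (q : ℝ) ^ m * s m := by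
  induction L, h using Nat.le_induction with
  | base => simp
  | succ L hL ih =>
    have block : ∑ i ∈ Ioc (blockStart q L) (blockStart q (L + 1)), σ i = (q : ℝ) ^ L * s L := by
      rw [sum_congr rfl fun i hi => hσ L i (mem_Ioc.1 hi).1 (mem_Ioc.1 hi).2, sum_const,
        Nat.card_Ioc, blockStart_succ, Nat.add_sub_cancel_left, nsmul_eq_mul]
      push_cast
      rfl
    rw [← sum_Ioc_consecutive _ (blockStart_mono q hL) (blockStart_mono q L.le_succ), ih, block,
      sum_Ico_succ_top hL]

lemma nonneg (hσ : IsBlockSeq q s σ) (hq : 1 ≤ q) (hs : ∀ ℓ, 0 ≤ s ℓ) {i : ℕ} (hi : 0 < i) :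
    0 ≤ σ i := by
  obtain ⟨ℓ, h₁, h₂⟩ := exists_blockStart_lt_le_succ hq hi
  exact hσ ℓ i h₁ h₂ ▸ hs ℓ

lemma sum_range_le (hσ : IsBlockSeq q s σ) (hq : 1 ≤ q) (hs : ∀ ℓ, 0 ≤ s ℓ) {ℓ k : ℕ}
    (hk : blockStart q ℓ < k) (n : ℕ) :
    ∑ i ∈ range n, σ (k + i) ≤ ∑ m ∈ Ico ℓ (k + n), (q : ℝ) ^ m * s m := by
  have hℓ : ℓ ≤ k + n := by have := le_blockStart hq ℓ; omega
  have hkn : k + n ≤ blockStart q (k + n) := le_blockStart hq (k + n)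
  rw [← hσ.sum_Ioc_blockStart hℓ, range_eq_Ico, sum_Ico_add]
  exact sum_le_sum_of_subset_of_nonneg (fun j hj => by simp only [mem_Ico, mem_Ioc] at *; omega)
    fun j hj _ => hσ.nonneg hq hs (by simp only [mem_Ioc] at hj; omega)

lemma tail_le (hσ : IsBlockSeq q s σ) (hq : 1 ≤ q) {p K : ℝ} (hpq : (q : ℝ) < p)
    (hs : ∀ ℓ, 0 ≤ s ℓ) (hsK : ∀ ℓ, s ℓ ≤ K * (p ^ ℓ)⁻¹) {ℓ k : ℕ} (hk : blockStart q ℓ < k) :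
    Summable (fun i => σ (k + i)) ∧ ∑' i, σ (k + i) ≤ K * (q / p) ^ ℓ / (1 - q / p) := by
  have hp : 0 < p := (Nat.cast_pos.2 hq).trans hpq
  have hK : 0 ≤ K := by simpa using (hs 0).trans (hsK 0)
  have hr : q / p < 1 := (div_lt_one hp).2 hpq
  have hmass : ∀ m, (q : ℝ) ^ m * s m ≤ K * (q / p) ^ m := fun m => calc
    (q : ℝ) ^ m * s m ≤ q ^ m * (K * (p ^ m)⁻¹) := by gcongr; exact hsK m
    _ = K * (q / p) ^ m := by rw [div_pow]; ring
  have hpartial : ∀ n, ∑ i ∈ range n, σ (k + i) ≤ K * (q / p) ^ ℓ / (1 - q / p) := fun n => calc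
    ∑ i ∈ range n, σ (k + i) ≤ ∑ m ∈ Ico ℓ (k + n), (q : ℝ) ^ m * s m := hσ.sum_range_le hq hs hk n
    _ ≤ ∑ m ∈ Ico ℓ (k + n), K * (q / p) ^ m := sum_le_sum fun m _ => hmass m
    _ = K * ∑ m ∈ Ico ℓ (k + n), (q / p) ^ m := (mul_sum ..).symm
    _ ≤ K * ((q / p) ^ ℓ / (1 - q / p)) := by
      gcongr
      exact geom_sum_Ico_le_of_lt_one (by positivity) hr
    _ = K * (q / p) ^ ℓ / (1 - q / p) := (mul_div_assoc ..).symm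
  have hnonneg : ∀ i, 0 ≤ σ (k + i) := fun i => hσ.nonneg hq hs (by omega)
  exact ⟨summable_of_sum_range_le hnonneg hpartial, Real.tsum_le_of_sum_range_le hnonneg hpartial⟩

end IsBlockSeq

/-- Effective-dimension estimate for the covariance eigenvalue sequence `(σ_i)_{i≥1}` of the
block-structured model: with `b_ℓ = (q^ℓ − 1)/(q − 1) = Σ_{j<ℓ} q^j` and `σ_i = s_ℓ` for
`b_ℓ < i ≤ b_{ℓ+1}`, the sequence is summable, `Σ_{i≥k} σ_i ≤ C q^ℓ σ_k` for `b_ℓ < k ≤ b_{ℓ+1}`,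
and `Σ_{i≥k} σ_i ≤ C' k σ_k` for every `k ≥ 1`. -/
theorem covariance_effective_dimension
    (q : ℕ) (hq : 2 ≤ q) (p K₁ K₂ : ℝ) (hpq : (q : ℝ) < p)
    (hK₁ : 0 < K₁) (hK₁₂ : K₁ ≤ K₂) :
    ∃ C C' : ℝ, 0 < C ∧ 0 < C' ∧
      ∀ s : ℕ → ℝ,
        (∀ ℓ : ℕ, K₁ * p ^ (-(ℓ : ℝ)) ≤ s ℓ ∧ s ℓ ≤ K₂ * p ^ (-(ℓ : ℝ))) →
        ∀ σ : ℕ → ℝ,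
        (∀ ℓ i : ℕ, (∑ j ∈ range ℓ, q ^ j) < i → i ≤ ∑ j ∈ range (ℓ + 1), q ^ j →
            σ i = s ℓ) →
        (Summable fun i : ℕ => σ (i + 1)) ∧
        (∀ ℓ k : ℕ, (∑ j ∈ range ℓ, q ^ j) < k → k ≤ ∑ j ∈ range (ℓ + 1), q ^ j →
            ∑' i : ℕ, σ (k + i) ≤ C * (q : ℝ) ^ ℓ * σ k) ∧
        (∀ k : ℕ, 1 ≤ k → ∑' i : ℕ, σ (k + i) ≤ C' * k * σ k) := by
  have hq1 : 1 ≤ q := by omega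
  have hq' : (2 : ℝ) ≤ q := by exact_mod_cast hq
  have hp : 0 < p := by linarith
  have hr : 0 < 1 - q / p := sub_pos.2 ((div_lt_one hp).2 hpq)
  set C := K₂ / (1 - q / p) / K₁ with hC_def
  have hC : 0 < C := by have : 0 < K₂ := hK₁.trans_le hK₁₂; positivity
  refine ⟨C, C * (q - 1), hC, mul_pos hC (by linarith), fun s hs σ hσ => ?_⟩
  simp only [Real.rpow_neg hp.le, Real.rpow_natCast] at hs
  have hs0 : ∀ ℓ, 0 ≤ s ℓ := fun ℓ => (by positivity : 0 ≤ K₁ * (p ^ ℓ)⁻¹).trans (hs ℓ).1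
  have htail {ℓ k : ℕ} (hk : blockStart q ℓ < k) :=
    IsBlockSeq.tail_le hσ hq1 hpq hs0 (fun m => (hs m).2) hk
  have hblock : ∀ ℓ k, blockStart q ℓ < k → k ≤ blockStart q (ℓ + 1) →
      ∑' i, σ (k + i) ≤ C * (q : ℝ) ^ ℓ * σ k := fun ℓ k hk hk' => calc
    ∑' i, σ (k + i) ≤ K₂ * (q / p) ^ ℓ / (1 - q / p) := (htail hk).2
    _ = C * q ^ ℓ * (K₁ * (p ^ ℓ)⁻¹) := by rw [hC_def, div_pow]; field_simp
    _ ≤ C * q ^ ℓ * σ k := by rw [hσ ℓ k hk hk']; gcongr; exact (hs ℓ).1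
  refine ⟨?_, hblock, fun k hk => ?_⟩
  · simpa only [add_comm 1] using (htail (ℓ := 0) (k := 1) (by simp [blockStart_zero])).1
  · obtain ⟨ℓ, hk₁, hk₂⟩ := exists_blockStart_lt_le_succ hq1 hk
    calc ∑' i, σ (k + i) ≤ C * (q : ℝ) ^ ℓ * σ k := hblock ℓ k hk₁ hk₂
      _ ≤ C * ((q - 1) * k) * σ k := by
        gcongr
        · exact IsBlockSeq.nonneg hσ hq1 hs0 hk
        · exact pow_le_pred_mul_of_blockStart_lt hq hk₁
      _ = C * (q - 1) * k * σ k := by ring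
end
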